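/- A polynomial over ℤ/p^a with nonzero reduction mod p cannot be divisible by ∏_{i=1}^t (X − αᵢ)^r for distinct units αᵢ (with pairwise distinct reductions mod p) if t·r exceeds its degree. -/
import Mathlib


theorem not_dvd_prod_pow_of_degree_lt (p a D t r : ℕ) (hp : p.Prime) (ha : 1 ≤ a)
    (R : Polynomial (ZMod (p ^ a)))
    (hR : R.map (ZMod.castHom (dvd_pow_self p (by omega)) (ZMod p)) ≠ 0)
    (hdeg : R.natDegree ≤ D)
    (α : Fin t → ZMod (p ^ a)) (hα : ∀ i, IsUnit (α i))
    (hdist : ∀ i j, i ≠ j →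
      ZMod.castHom (dvd_pow_self p (by omega)) (ZMod p) (α i) ≠
      ZMod.castHom (dvd_pow_self p (by omega)) (ZMod p) (α j))
    (hr : 1 ≤ r) (htr : D < t * r) :
    ¬ (∏ i, (Polynomial.X - Polynomial.C (α i)) ^ r) ∣ R := by
  haveI : Fact p.Prime := ⟨hp⟩
  set φ := ZMod.castHom (dvd_pow_self p (by omega : a ≠ 0)) (ZMod p)
  intro h
  have hmap : (∏ i, (Polynomial.X - Polynomial.C (φ (α i))) ^ r) ∣ R.map φ := by
    have := Polynomial.map_dvd φ h
    simpa [Polynomial.map_prod, Polynomial.map_pow] using this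
  have hle := Polynomial.natDegree_le_of_dvd hmap hR
  have hdegprod :
      (∏ i, (Polynomial.X - Polynomial.C (φ (α i))) ^ r).natDegree = t * r := by
    rw [Polynomial.natDegree_prod]
    · simp [Polynomial.natDegree_pow, Finset.sum_const, mul_comm]
    · intro i _
      exact pow_ne_zero _ (Polynomial.X_sub_C_ne_zero _)
  have hRle : (R.map φ).natDegree ≤ D :=
    le_trans (Polynomial.natDegree_map_le) hdeg
  omega
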